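/- Assume μ < −1 and μλ + μ + λ > 0 (so also λ < 0). Then H_{μλ} has no even eigenvalue in (2, +∞); moreover, if z_μ < 0 is an even eigenvalue of H_{μ0} and z_λ < 0 is an even eigenvalue of H_{0λ}, then there exist even eigenvalues ζ₁ and ζ₂ of H_{μλ} such that ζ₁ < min(z_μ, z_λ) ≤ max(z_μ, z_λ) < ζ₂ < 0. -/

import Mathlib

/-!
Write `z = 1 - (r + r⁻¹) / 2` with `0 < |r| < 1`, which covers `z < 0` (for `r > 0`) and
`z > 2` (for `r < 0`). For `|x| ≥ 2` the eigenvalue equation is the free recurrence with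
characteristic roots `r` and `r⁻¹`, so an `ℓ²` solution is `ψ(x) = r ^ |x|` there up to a scalar;
matching at `x = 0` and `x = 1` forces `ψ(0) = λ r + 1` and shows that `z` is an even eigenvalue
of `H_{μλ}` exactly when `G(r) = (r² + 2μr + 1)(λr + 1) - 2r²` vanishes.

In the region, `G > 0` on `(-1, 0)`, which rules out even eigenvalues above `2`. On `(0, 1)`,
`G(0) = 1` and `G(1) = 2(μλ + μ + λ) > 0`, while `G` is negative at the roots belonging to
`H_{μ0}` and `H_{0λ}`; the intermediate value theorem gives roots below and above both of them,
and `z` is increasing in `r` on `(0, 1]`.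
-/

open MeasureTheory Real Filter Topology

/-- The potential `v(0) = μ`, `v(±1) = λ/2`, `v(x) = 0` for `|x| > 1`. -/
noncomputable def pot (μ lam : ℝ) (x : ℤ) : ℝ :=
  if x = 0 then μ else if x = 1 ∨ x = -1 then lam / 2 else 0

/-- A real number `z` is an *even eigenvalue* of the discrete Schrödinger operator
`H_{μλ}` on `ℓ²(ℤ; ℂ)`, `(H_{μλ}ψ)(x) = ψ(x) − (ψ(x+1) + ψ(x−1))/2 + v(x)ψ(x)`,
if there is a nonzero even `ψ ∈ ℓ²(ℤ; ℂ)` with `H_{μλ}ψ = zψ`. -/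
def IsEvenEigenvalue (μ lam z : ℝ) : Prop :=
  ∃ ψ : lp (fun _ : ℤ => ℂ) 2, ψ ≠ 0 ∧ (∀ x : ℤ, ψ (-x) = ψ x) ∧
    ∀ x : ℤ, ψ x - (ψ (x + 1) + ψ (x - 1)) / 2 + (pot μ lam x : ℂ) * ψ x = (z : ℂ) * ψ x

open scoped ENNReal
open Set

theorem Memℓp.tendsto_cofinite_zero {α E : Type*} [NormedAddCommGroup E] {p : ℝ≥0∞}
    {f : α → E} (hf : Memℓp f p) (hp : 0 < p.toReal) : Tendsto f cofinite (𝓝 0) := by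
  have h := (hf.summable hp).tendsto_cofinite_zero.rpow_const (p := p.toReal⁻¹)
    (Or.inr (by positivity))
  rw [Real.zero_rpow (inv_ne_zero hp.ne')] at h
  exact tendsto_zero_iff_norm_tendsto_zero.2 <|
    h.congr fun i => Real.rpow_rpow_inv (norm_nonneg _) hp.ne'

theorem memℓp_pow_natAbs {p : ℝ≥0∞} (hp : 0 < p.toReal) {r : ℝ} (hr₀ : 0 ≤ r) (hr : r < 1) :
    Memℓp (fun x : ℤ => r ^ x.natAbs) p := by
  have hgeom : Summable fun n : ℕ => (r ^ p.toReal) ^ n :=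
    summable_geometric_of_lt_one (by positivity) (Real.rpow_lt_one hr₀ hr hp)
  refine memℓp_gen (Summable.of_nat_of_neg ?_ ?_) <;>
    simpa [abs_of_nonneg hr₀, ← Real.rpow_pow_comm hr₀] using hgeom

theorem Function.Even.eq_of_forall_natCast {α : Type*} {f g : ℤ → α} (hf : f.Even)
    (hg : g.Even) (h : ∀ n : ℕ, f n = g n) (x : ℤ) : f x = g x := by
  obtain ⟨n, rfl | rfl⟩ := x.eq_nat_or_neg
  · exact h n
  · rw [hf, hg, h]

section Recurrence

variable {𝕜 : Type*} [NormedField 𝕜] {r : 𝕜}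

theorem eq_zero_of_eq_mul_succ_of_tendsto {a : ℕ → 𝕜} (hr : ‖r‖ ≤ 1)
    (ha : ∀ n, a n = r * a (n + 1)) (hlim : Tendsto a atTop (𝓝 0)) (n : ℕ) : a n = 0 := by
  have hmono : Monotone fun n => ‖a n‖ := monotone_nat_of_le_succ fun n => by
    rw [ha n, norm_mul]
    exact mul_le_of_le_one_left (norm_nonneg _) hr
  exact norm_le_zero_iff.1 (hmono.ge_of_tendsto (by simpa using hlim.norm) n)

/-- The characteristic roots are `r` and `r⁻¹`: `f (n + 1) - r * f n` is multiplied by `r⁻¹` at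
each step, so for a decaying solution it vanishes. -/
theorem eq_pow_mul_of_tendsto {f : ℕ → 𝕜} (hr : ‖r‖ ≤ 1)
    (hf : ∀ n, r * (f (n + 2) + f n) = (r ^ 2 + 1) * f (n + 1))
    (hlim : Tendsto f atTop (𝓝 0)) (n : ℕ) : f n = r ^ n * f 0 := by
  have hstep : ∀ n, f (n + 1) - r * f n = 0 := by
    refine eq_zero_of_eq_mul_succ_of_tendsto hr (fun n => by linear_combination -hf n) ?_
    simpa using (hlim.comp (tendsto_add_atTop_nat 1)).sub (hlim.const_mul r)
  induction n with
  | zero => simp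
  | succ n ih => rw [sub_eq_zero.1 (hstep n), ih]; ring

end Recurrence

noncomputable def energy (r : ℝ) : ℝ := 1 - (r + r⁻¹) / 2

noncomputable def secularFn (μ lam r : ℝ) : ℝ := (r ^ 2 + 2 * μ * r + 1) * (lam * r + 1) - 2 * r ^ 2

section Energy

variable {r z : ℝ}

theorem two_mul_one_sub_energy_mul (hr : r ≠ 0) : 2 * (1 - energy r) * r = r ^ 2 + 1 := by
  unfold energy
  field_simp
  ring

theorem energy_neg (r : ℝ) : energy (-r) = 2 - energy r := by
  unfold energy
  rw [inv_neg]
  ring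

@[simp]
theorem energy_one : energy 1 = 0 := by norm_num [energy]

theorem strictMonoOn_energy : StrictMonoOn energy (Ioc 0 1) := by
  intro r₁ hr₁ r₂ hr₂ h
  have key : (r₁ + r₁⁻¹) - (r₂ + r₂⁻¹) = (r₂ - r₁) * (1 - r₁ * r₂) / (r₁ * r₂) := by
    field_simp [hr₁.1.ne', hr₂.1.ne']
    ring
  have hpos : 0 < (r₂ - r₁) * (1 - r₁ * r₂) / (r₁ * r₂) := by
    have : r₁ * r₂ < 1 := by nlinarith [hr₁.1, hr₂.2]
    exact div_pos (mul_pos (by linarith) (by linarith)) (mul_pos hr₁.1 hr₂.1)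
  unfold energy
  linarith

/-- The smaller root `a - √(a² - 1)` of `r² - 2ar + 1`, with `a = 1 - z`. -/
theorem exists_energy_eq_of_neg (hz : z < 0) : ∃ r ∈ Ioo 0 1, energy r = z := by
  set a := 1 - z
  set s := √(a ^ 2 - 1)
  have hs : s ^ 2 = a ^ 2 - 1 := Real.sq_sqrt (by nlinarith)
  have hsa : s < a := by nlinarith [Real.sqrt_nonneg (a ^ 2 - 1)]
  have has : a - 1 < s := (Real.lt_sqrt (by linarith)).2 (by nlinarith)
  refine ⟨a - s, ⟨by linarith, by linarith⟩, ?_⟩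
  have hinv : (a - s)⁻¹ = a + s := inv_eq_of_mul_eq_one_right (by linear_combination -hs)
  rw [energy, hinv]
  ring

theorem exists_energy_eq_of_two_lt (hz : 2 < z) : ∃ r ∈ Ioo (-1) 0, energy r = z := by
  obtain ⟨r, hr, hrz⟩ := exists_energy_eq_of_neg (z := 2 - z) (by linarith)
  exact ⟨-r, ⟨by linarith [hr.2], by linarith [hr.1]⟩, by rw [energy_neg, hrz]; ring⟩

end Energy

section Secular

variable {μ lam r : ℝ}

@[simp]
theorem secularFn_zero : secularFn μ lam 0 = 1 := by norm_num [secularFn]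

theorem secularFn_one : secularFn μ lam 1 = 2 * (μ * lam + μ + lam) := by
  unfold secularFn
  ring

theorem continuous_secularFn : Continuous (secularFn μ lam) := by
  unfold secularFn
  fun_prop

theorem secularFn_pos (hμ : μ ≤ 0) (hlam : lam ≤ 0) (hr : r ∈ Ioo (-1) 0) :
    0 < secularFn μ lam r := by
  obtain ⟨hr₁, hr₀⟩ := hr
  have hA : 0 < r ^ 2 + 2 * μ * r + 1 := by nlinarith
  have hB : 0 ≤ (r ^ 2 + 2 * μ * r + 1) * (lam * r) := mul_nonneg hA.le (by nlinarith)
  unfold secularFn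
  nlinarith

theorem secularFn_neg_of_secularFn_lam_zero (h : secularFn μ 0 r = 0) (hlam : lam < 0)
    (hr : 0 < r) : secularFn μ lam r < 0 := by
  have : secularFn μ lam r = 2 * lam * r ^ 3 := by
    unfold secularFn at h ⊢
    linear_combination (lam * r + 1) * h
  rw [this]
  have := pow_pos hr 3
  nlinarith

theorem secularFn_neg_of_secularFn_mu_zero (h : secularFn 0 lam r = 0) (hμ : μ < 0)
    (hr : 0 < r) : secularFn μ lam r < 0 := by
  unfold secularFn at h ⊢
  have hB : 0 < lam * r + 1 := by nlinarith
  have := mul_pos hr hB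
  nlinarith

theorem exists_secularFn_eq_zero_of_neg (hr : r ∈ Ioo 0 1) (hneg : secularFn μ lam r < 0)
    (h₁ : 0 < secularFn μ lam 1) :
    (∃ ρ ∈ Ioo 0 r, secularFn μ lam ρ = 0) ∧ ∃ ρ ∈ Ioo r 1, secularFn μ lam ρ = 0 :=
  ⟨intermediate_value_Ioo' hr.1.le continuous_secularFn.continuousOn
      ⟨hneg, by rw [secularFn_zero]; exact one_pos⟩,
    intermediate_value_Ioo hr.2.le continuous_secularFn.continuousOn ⟨hneg, h₁⟩⟩

end Secular

/-- `H_{μλ}` on all functions `ℤ → ℂ`; the equation in `IsEvenEigenvalue` unfolds to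
`hamiltonian μ lam ψ x = z * ψ x`. -/
noncomputable def hamiltonian (μ lam : ℝ) (ψ : ℤ → ℂ) (x : ℤ) : ℂ :=
  ψ x - (ψ (x + 1) + ψ (x - 1)) / 2 + (pot μ lam x : ℂ) * ψ x

noncomputable def boundState (lam r : ℝ) (x : ℤ) : ℂ :=
  if x = 0 then lam * r + 1 else (r : ℂ) ^ x.natAbs

section Operator

variable {μ lam r : ℝ}

@[simp]
theorem pot_zero : pot μ lam 0 = μ := if_pos rfl

@[simp]
theorem pot_one : pot μ lam 1 = lam / 2 := by simp [pot]

theorem pot_of_two_le {x : ℤ} (hx : 2 ≤ x) : pot μ lam x = 0 := by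
  unfold pot
  rw [if_neg (by omega), if_neg (by omega)]

theorem pot_even : (pot μ lam).Even := by
  intro x
  unfold pot
  simp [neg_eq_iff_eq_neg, or_comm]

theorem Function.Even.hamiltonian {ψ : ℤ → ℂ} (hψ : ψ.Even) : (hamiltonian μ lam ψ).Even := by
  intro x
  unfold _root_.hamiltonian
  rw [show -x + 1 = -(x - 1) by ring, show -x - 1 = -(x + 1) by ring, hψ, hψ, hψ, pot_even]
  ring

theorem boundState_even : (boundState lam r).Even := by
  intro x
  simp only [boundState, neg_eq_zero, Int.natAbs_neg]

theorem boundState_of_ne_zero {x : ℤ} (hx : x ≠ 0) : boundState lam r x = (r : ℂ) ^ x.natAbs :=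
  if_neg hx

theorem memℓp_boundState (hr : |r| < 1) : Memℓp (boundState lam r) 2 := by
  refine ((memℓp_pow_natAbs (by norm_num) (abs_nonneg r) hr).const_mul
    (‖(lam * r + 1 : ℂ)‖ + 1)).mono fun x => ?_
  unfold boundState
  split_ifs with hx
  · simp [hx]
  · simp only [norm_pow, Complex.norm_real, Real.norm_eq_abs]
    nlinarith [norm_nonneg (lam * r + 1 : ℂ), pow_nonneg (abs_nonneg r) x.natAbs]

theorem hamiltonian_boundState_natCast (hr : r ≠ 0) (hG : secularFn μ lam r = 0) (n : ℕ) :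
    hamiltonian μ lam (boundState lam r) n = energy r * boundState lam r n := by
  have hE : (2 * (1 - energy r) * r : ℂ) = r ^ 2 + 1 := by
    exact_mod_cast two_mul_one_sub_energy_mul hr
  have hG' : ((r : ℂ) ^ 2 + 2 * μ * r + 1) * (lam * r + 1) - 2 * r ^ 2 = 0 := by
    exact_mod_cast hG
  rcases n with _ | _ | m
  · simp [hamiltonian, boundState]
    refine mul_left_cancel₀ (mul_ne_zero two_ne_zero (Complex.ofReal_ne_zero.2 hr)) ?_
    linear_combination hG' + (lam * r + 1 : ℂ) * hE
  · simp [hamiltonian, boundState]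
    linear_combination hE / 2
  · rw [hamiltonian, pot_of_two_le (by omega), boundState_of_ne_zero (by omega),
      boundState_of_ne_zero (by omega), boundState_of_ne_zero (by omega),
      show (((m + 2 : ℕ) : ℤ) + 1).natAbs = (m + 1) + 2 by omega,
      show (((m + 2 : ℕ) : ℤ) - 1).natAbs = m + 1 by omega,
      show ((m + 2 : ℕ) : ℤ).natAbs = (m + 1) + 1 by omega]
    push_cast
    linear_combination (r : ℂ) ^ (m + 1) * hE / 2

end Operator

section Eigenvalue

variable {μ lam r : ℝ}

theorem isEvenEigenvalue_energy (hr₀ : r ≠ 0) (hr : |r| < 1) (hG : secularFn μ lam r = 0) :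
    IsEvenEigenvalue μ lam (energy r) := by
  refine ⟨⟨boundState lam r, memℓp_boundState hr⟩, fun h => hr₀ ?_, boundState_even,
    boundState_even.hamiltonian.eq_of_forall_natCast
      (boundState_even.left_comp (energy r * ·)) (hamiltonian_boundState_natCast hr₀ hG)⟩
  have h₁ := congrArg (fun ψ : lp (fun _ : ℤ => ℂ) 2 => ψ 1) h
  simpa [boundState] using h₁

theorem secularFn_eq_zero_of_hamiltonian_eq {ψ : ℤ → ℂ} (hr₀ : r ≠ 0) (hr : |r| < 1)
    (hψ : ψ ≠ 0) (heven : ψ.Even) (hdecay : Tendsto (fun n : ℕ => ψ (n + 1)) atTop (𝓝 0))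
    (heq : ∀ x, hamiltonian μ lam ψ x = energy r * ψ x) : secularFn μ lam r = 0 := by
  have hE : (2 * (1 - energy r) * r : ℂ) = r ^ 2 + 1 := by
    exact_mod_cast two_mul_one_sub_energy_mul hr₀
  have hgeom : ∀ n : ℕ, ψ (n + 1) = r ^ n * ψ 1 := by
    refine eq_pow_mul_of_tendsto (f := fun n : ℕ => ψ (n + 1)) (by simpa using hr.le)
      (fun n => ?_) hdecay
    have h := heq (n + 2)
    rw [hamiltonian, pot_of_two_le (by omega), Complex.ofReal_zero,
      show (n : ℤ) + 2 + 1 = ((n + 2 : ℕ) : ℤ) + 1 by push_cast; ring,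
      show (n : ℤ) + 2 - 1 = n + 1 by ring,
      show (n : ℤ) + 2 = ((n + 1 : ℕ) : ℤ) + 1 by push_cast; ring] at h
    linear_combination (-2 * (r : ℂ)) * h + ψ ((n + 1 : ℕ) + 1) * hE
  have h₀ := heq 0
  have h₁ := heq 1
  have h₂ := hgeom 1
  norm_num [hamiltonian, heven 1] at h₀ h₁ h₂
  rw [h₂] at h₁
  have hψ₁ : ψ 1 ≠ 0 := by
    intro h1
    refine hψ (funext <| heven.eq_of_forall_natCast Function.Even.zero fun n => ?_)
    rcases n with _ | n
    · rw [Pi.zero_apply, Nat.cast_zero]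
      linear_combination -2 * h₁ + (2 - r + lam - 2 * energy r : ℂ) * h1
    · rw [Pi.zero_apply, Nat.cast_succ, hgeom, h1, mul_zero]
  have key : (secularFn μ lam r : ℂ) * ψ 1 = 0 := by
    push_cast [secularFn]
    linear_combination 2 * (r : ℂ) ^ 2 * h₀ + 2 * r * (r ^ 2 + 2 * μ * r + 1 : ℂ) * h₁ -
      (r * ψ 0 + (r ^ 2 + 2 * μ * r + 1 : ℂ) * ψ 1) * hE
  exact_mod_cast (mul_eq_zero.1 key).resolve_right hψ₁

theorem secularFn_eq_zero_of_isEvenEigenvalue (hr₀ : r ≠ 0) (hr : |r| < 1)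
    (hz : IsEvenEigenvalue μ lam (energy r)) : secularFn μ lam r = 0 := by
  obtain ⟨ψ, hψ, heven, heq⟩ := hz
  refine secularFn_eq_zero_of_hamiltonian_eq hr₀ hr (fun h => hψ (lp.ext h)) heven ?_ heq
  refine ((lp.memℓp ψ).tendsto_cofinite_zero (by norm_num)).comp ?_
  rw [← Nat.cofinite_eq_atTop]
  exact Function.Injective.tendsto_cofinite fun a b hab => by simpa using hab

end Eigenvalue

theorem exists_isEvenEigenvalue_lt_min_max_lt {μ lam r₁ r₂ : ℝ} (hr₁ : r₁ ∈ Ioo 0 1)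
    (hr₂ : r₂ ∈ Ioo 0 1) (hG₁ : secularFn μ lam r₁ < 0) (hG₂ : secularFn μ lam r₂ < 0)
    (h1 : 0 < secularFn μ lam 1) :
    ∃ ζ₁ ζ₂ : ℝ, IsEvenEigenvalue μ lam ζ₁ ∧ IsEvenEigenvalue μ lam ζ₂ ∧
      ζ₁ < min (energy r₁) (energy r₂) ∧ max (energy r₁) (energy r₂) < ζ₂ ∧ ζ₂ < 0 := by
  have hIoc : Ioo (0 : ℝ) 1 ⊆ Ioc 0 1 := Ioo_subset_Ioc_self
  have hmin : min r₁ r₂ ∈ Ioo 0 1 := ⟨lt_min hr₁.1 hr₂.1, min_lt_of_left_lt hr₁.2⟩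
  have hmax : max r₁ r₂ ∈ Ioo 0 1 := ⟨lt_max_of_lt_left hr₁.1, max_lt hr₁.2 hr₂.2⟩
  obtain ⟨⟨ρ₁, hρ₁, hρ₁G⟩, -⟩ :=
    exists_secularFn_eq_zero_of_neg hmin (min_rec' (secularFn μ lam · < 0) hG₁ hG₂) h1
  obtain ⟨-, ρ₂, hρ₂, hρ₂G⟩ :=
    exists_secularFn_eq_zero_of_neg hmax (max_rec' (secularFn μ lam · < 0) hG₁ hG₂) h1
  have hρ₁' : ρ₁ ∈ Ioo 0 1 := ⟨hρ₁.1, hρ₁.2.trans hmin.2⟩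
  have hρ₂' : ρ₂ ∈ Ioo 0 1 := ⟨hmax.1.trans hρ₂.1, hρ₂.2⟩
  rw [← strictMonoOn_energy.monotoneOn.map_min (hIoc hr₁) (hIoc hr₂),
    ← strictMonoOn_energy.monotoneOn.map_max (hIoc hr₁) (hIoc hr₂)]
  refine ⟨energy ρ₁, energy ρ₂,
    isEvenEigenvalue_energy hρ₁.1.ne' ((abs_of_pos hρ₁.1).trans_lt hρ₁'.2) hρ₁G,
    isEvenEigenvalue_energy hρ₂'.1.ne' ((abs_of_pos hρ₂'.1).trans_lt hρ₂.2) hρ₂G,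
    strictMonoOn_energy (hIoc hρ₁') (hIoc hmin) hρ₁.2,
    strictMonoOn_energy (hIoc hmax) (hIoc hρ₂') hρ₂.1, ?_⟩
  simpa using strictMonoOn_energy (hIoc hρ₂') ⟨one_pos, le_rfl⟩ hρ₂.2

/-- Region `G_{20}`: if `μ < −1` and `μλ + μ + λ > 0`, then `H_{μλ}` has no even
eigenvalue in `(2, +∞)`; moreover, if `z_μ < 0` is an even eigenvalue of `H_{μ0}` and
`z_λ < 0` is an even eigenvalue of `H_{0λ}`, then there exist even eigenvalues `ζ₁, ζ₂`
of `H_{μλ}` with `ζ₁ < min(z_μ, z_λ) ≤ max(z_μ, z_λ) < ζ₂ < 0`. -/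
theorem region_G20 (μ lam : ℝ) (hμ : μ < -1) (h : 0 < μ * lam + μ + lam) :
    (∀ z : ℝ, 2 < z → ¬ IsEvenEigenvalue μ lam z) ∧
    ∀ zμ zlam : ℝ, zμ < 0 → IsEvenEigenvalue μ 0 zμ →
      zlam < 0 → IsEvenEigenvalue 0 lam zlam →
      ∃ ζ₁ ζ₂ : ℝ, IsEvenEigenvalue μ lam ζ₁ ∧ IsEvenEigenvalue μ lam ζ₂ ∧
        ζ₁ < min zμ zlam ∧ max zμ zlam < ζ₂ ∧ ζ₂ < 0 := by
  have hlam : lam < 0 := by nlinarith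
  refine ⟨fun z hz hev => ?_, fun zμ zlam hzμ hevμ hzlam hevlam => ?_⟩
  · obtain ⟨r, hr, rfl⟩ := exists_energy_eq_of_two_lt hz
    exact (secularFn_pos (by linarith) hlam.le hr).ne' <|
      secularFn_eq_zero_of_isEvenEigenvalue hr.2.ne (abs_lt.2 ⟨hr.1, hr.2.trans one_pos⟩) hev
  · obtain ⟨rμ, hrμ, rfl⟩ := exists_energy_eq_of_neg hzμ
    obtain ⟨rl, hrl, rfl⟩ := exists_energy_eq_of_neg hzlam
    have hGμ := secularFn_eq_zero_of_isEvenEigenvalue hrμ.1.ne'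
      ((abs_of_pos hrμ.1).trans_lt hrμ.2) hevμ
    have hGl := secularFn_eq_zero_of_isEvenEigenvalue hrl.1.ne'
      ((abs_of_pos hrl.1).trans_lt hrl.2) hevlam
    exact exists_isEvenEigenvalue_lt_min_max_lt hrμ hrl
      (secularFn_neg_of_secularFn_lam_zero hGμ hlam hrμ.1)
      (secularFn_neg_of_secularFn_mu_zero hGl (by linarith) hrl.1)
      (by rw [secularFn_one]; linarith)
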